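/- Every coloring of the quantum graph Q_{n,m} has cardinality at least slog(n, m+1). -/

import Mathlib

open Matrix

/-- The tropical, cyclical, commutative quantum graph `Q_{n,m}`: its edge space is spanned
by the identity together with `m` commuting positive self-adjoint operators `A i` with a
common orthonormal eigenbasis; for each `i`, `w i` lists the eigenvectors of `A i` in
decreasing order of eigenvalue `lam i`, the eigenvalues are tropically separated
(`0 < λ_{i,j+1} < λ_{i,j}/n²`), consecutive labelings are cyclic shifts by
`⌊n/m⌋ (+1 for the first n mod m indices)`, and `ws` is the single-index relabeling in
which `w_{(k−1)m+1},…,w_{km}` each equal `w_{i,k}` for some `i`. -/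
structure Qnm (n m : ℕ) where
  A : Fin m → Matrix (Fin n) (Fin n) ℂ
  herm : ∀ i, (A i).IsHermitian
  comm : ∀ i j, A i * A j = A j * A i
  lam : Fin m → Fin n → ℝ
  w : Fin m → Fin n → (Fin n → ℂ)
  ws : Fin n → (Fin n → ℂ)
  ortho : ∀ i j k, star (w i j) ⬝ᵥ w i k = if j = k then 1 else 0
  span : ∀ i, Submodule.span ℂ (Set.range (w i)) = ⊤
  eig : ∀ i j, (A i).mulVec (w i j) = (lam i j : ℂ) • w i j
  pos : ∀ i j, 0 < lam i j
  tropical : ∀ i (j : Fin n) (h : (j : ℕ) + 1 < n),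
    lam i ⟨(j : ℕ) + 1, h⟩ < lam i j / (n : ℝ) ^ 2
  cyclical : ∀ (i : Fin m) (hi : (i : ℕ) + 1 < m) (j : Fin n),
    w ⟨(i : ℕ) + 1, hi⟩ j =
      w i ⟨((j : ℕ) + n / m + if (i : ℕ) + 1 ≤ n % m then 1 else 0) % n,
        Nat.mod_lt _ (Nat.lt_of_le_of_lt (Nat.zero_le _) j.isLt)⟩
  relabel : ∀ t : Fin n, ∃ i : Fin m,
    ws t = w i ⟨(t : ℕ) / m, Nat.lt_of_le_of_lt (Nat.div_le_self _ _) t.isLt⟩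
  wsortho : ∀ s t, star (ws s) ⬝ᵥ ws t = if s = t then 1 else 0
  wsspan : Submodule.span ℂ (Set.range ws) = ⊤

/-- A code of `Q_{n,m}`: an (orthogonal projection onto a) subspace `C` with
`P_C A P_C = ε_C(A) P_C` for every edge operator `A` (equivalently, for the identity
and each basis operator `A i`). -/
def Qnm.IsCode {n m : ℕ} (Q : Qnm n m) (P : Matrix (Fin n) (Fin n) ℂ) : Prop :=
  P.IsHermitian ∧ P * P = P ∧ ∀ i, ∃ ε : ℝ, P * Q.A i * P = (ε : ℂ) • P

def slog (q : ℕ) : ℕ → ℕ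
  | 0 => 0
  | p + 1 => slog q (p + 1 - max 1 ((p + 1 + q - 1) / q)) + 1
decreasing_by
  exact Nat.sub_lt (Nat.succ_pos p) (lt_of_lt_of_le Nat.zero_lt_one (le_max_left _ _))

/-!
Fix codes `S ⊆ K` of total rank `D < n`, and let `P_S = ∑_{P ∈ S} P` and `R = ⌊D/m⌋ + 1`. The
eigenbases of the `A i` are rotations of one another, so their first `R` vectors include at least
`D + 1` distinct ones; as `∑ⱼ ⟨w 0 j, P_S w 0 j⟩ = D`, one of them, `w i j` with `j < R`, has
`⟨w i j, P_S w i j⟩ ≤ D / (D + 1)`. Taking traces in `P A_i P = ε_P P` and summing over the codes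
outside `S` gives `∑ ε_P rank P = ∑ₖ λ i k ⟨w i k, (1 - P_S) w i k⟩ ≥ λ i j / n`. If all those codes
of positive rank had rank `> R`, min-max would give `ε_P ≤ λ i R`, so the sum would be at most
`n λ i R < λ i j / n` by tropical separation. Hence some code outside `S` has rank in `[1, R]`.
Adding such codes greedily, each step takes the total rank from `D` to at most `D + ⌊D/m⌋ + 1`,
which costs one step of the recursion of `slog (m + 1)`.
-/

open scoped ComplexOrder

theorem slog_succ (q p : ℕ) :
    slog q (p + 1) = slog q (p + 1 - max 1 ((p + 1 + q - 1) / q)) + 1 := by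
  rw [slog]

theorem slog_monotone (q : ℕ) : Monotone (slog q) := by
  intro a b hab
  induction b using Nat.strong_induction_on generalizing a with
  | _ b ih =>
    obtain _ | a := a
    · simp [slog]
    obtain ⟨b, rfl⟩ : ∃ b', b = b' + 1 := Nat.exists_eq_add_one.mpr (by omega)
    rw [slog_succ, slog_succ]
    obtain ⟨t, rfl⟩ := Nat.exists_eq_add_of_le (show a ≤ b by omega)
    have hceil : (a + t + q) / q ≤ (a + q) / q + t := by
      rcases Nat.eq_zero_or_pos q with rfl | hq
      · simp
      calc (a + t + q) / q ≤ (a + q + t * q) / q := Nat.div_le_div_right (by nlinarith)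
        _ = (a + q) / q + t := Nat.add_mul_div_right _ _ hq
    have hmono : (a + q) / q ≤ (a + t + q) / q := Nat.div_le_div_right (by omega)
    rw [show a + 1 + q - 1 = a + q by omega, show a + t + 1 + q - 1 = a + t + q by omega]
    exact Nat.succ_le_succ (ih _ (by omega) (by omega))

theorem slog_add_le_succ {m D d : ℕ} (hd : 0 < d) (hdD : d ≤ D / m + 1) :
    slog (m + 1) (D + d) ≤ slog (m + 1) D + 1 := by
  obtain ⟨p, hp⟩ : ∃ p, D + d = p + 1 := ⟨D + d - 1, by omega⟩
  rw [hp, slog_succ]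
  gcongr
  apply slog_monotone
  have : d ≤ (p + 1 + (m + 1) - 1) / (m + 1) := by
    rw [Nat.le_div_iff_mul_le (by omega), show p + 1 + (m + 1) - 1 = D + d + m by omega]
    nlinarith [Nat.mul_le_mul_right m hdD, Nat.div_mul_le_self D m]
  omega

theorem slog_sum_le_card {ι : Type*} (K : Finset ι) (d : ι → ℕ) {m : ℕ}
    (h : ∀ S ⊆ K, ∑ c ∈ S, d c < ∑ c ∈ K, d c →
      ∃ c ∈ K, c ∉ S ∧ 0 < d c ∧ d c ≤ (∑ c ∈ S, d c) / m + 1) :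
    slog (m + 1) (∑ c ∈ K, d c) ≤ K.card := by
  classical
  suffices key : ∀ k, ∀ S ⊆ K, (K \ S).card = k →
      slog (m + 1) (∑ c ∈ K, d c) ≤ slog (m + 1) (∑ c ∈ S, d c) + k by
    simpa [slog] using key K.card ∅ (Finset.empty_subset K) (by simp)
  intro k
  induction k with
  | zero =>
    intro S hS hk
    rw [Finset.card_eq_zero, Finset.sdiff_eq_empty_iff_subset] at hk
    rw [Finset.Subset.antisymm hS hk, add_zero]
  | succ k ih =>
    intro S hS hk
    by_cases hlt : ∑ c ∈ S, d c < ∑ c ∈ K, d c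
    · obtain ⟨c, hcK, hcS, hc, hcle⟩ := h S hS hlt
      have hk' : (K \ insert c S).card = k := by
        rw [Finset.sdiff_insert, Finset.card_erase_of_mem (by simp [hcK, hcS]), hk]; rfl
      calc slog (m + 1) (∑ c ∈ K, d c)
          ≤ slog (m + 1) (∑ c ∈ S, d c + d c) + k := by
            simpa [Finset.sum_insert hcS, add_comm] using ih _ (Finset.insert_subset hcK hS) hk'
        _ ≤ slog (m + 1) (∑ c ∈ S, d c) + (k + 1) := by
            have := slog_add_le_succ hc hcle; omega
    · have := Finset.sum_le_sum_of_subset (f := d) hS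
      rw [show ∑ c ∈ K, d c = ∑ c ∈ S, d c by omega]
      omega

namespace Matrix

theorem trace_eq_rank_of_isIdempotentElem {K ι : Type*} [Field K] [Fintype ι] [DecidableEq ι]
    {P : Matrix ι ι K} (hP : IsIdempotentElem P) : P.trace = P.rank := by
  have hP' : IsIdempotentElem (toLin' P) := hP.map toLinAlgEquiv'
  rw [← trace_toLin'_eq, (LinearMap.isProj_range_iff_isIdempotentElem _).2 hP' |>.trace,
    toLin'_apply', rank]

theorem sum_rank_eq_card_of_sum_eq_one {K ι : Type*} [Field K] [CharZero K] [Fintype ι]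
    [DecidableEq ι] {s : Finset (Matrix ι ι K)} (hs : ∀ P ∈ s, IsIdempotentElem P)
    (hsum : ∑ P ∈ s, P = 1) : ∑ P ∈ s, P.rank = Fintype.card ι := by
  have h := congrArg trace hsum
  rw [trace_sum, trace_one,
    Finset.sum_congr rfl fun P hP => trace_eq_rank_of_isIdempotentElem (hs P hP)] at h
  exact_mod_cast h

theorem IsHermitian.star_dotProduct_mulVec {R ι : Type*} [CommRing R] [StarRing R] [Fintype ι]
    {P : Matrix ι ι R} (hP : P.IsHermitian) (x y : ι → R) :
    star x ⬝ᵥ (P *ᵥ y) = star (P *ᵥ x) ⬝ᵥ y := by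
  rw [dotProduct_mulVec, star_mulVec, hP.eq]

section OrthonormalFamily

variable {R ι : Type*} [CommRing R] [StarRing R] [Fintype ι] [DecidableEq ι] {v : ι → ι → R}

theorem trace_eq_sum_dotProduct_mulVec (hv : ∀ j k, star (v j) ⬝ᵥ v k = if j = k then 1 else 0)
    (M : Matrix ι ι R) : M.trace = ∑ j, star (v j) ⬝ᵥ (M *ᵥ v j) := by
  set U : Matrix ι ι R := (of v)ᵀ
  have hU : Uᴴ * U = 1 := by
    ext j k
    simpa [U, mul_apply, dotProduct, one_apply] using hv j k
  calc M.trace = (Uᴴ * (M * U)).trace := by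
        rw [trace_mul_comm, mul_assoc, mul_eq_one_comm.mp hU, mul_one]
    _ = ∑ j, star (v j) ⬝ᵥ (M *ᵥ v j) := by
        simp [U, trace, mul_apply, dotProduct, mulVec, Finset.mul_sum]

theorem trace_mul_eq_sum_eigenvalue (hv : ∀ j k, star (v j) ⬝ᵥ v k = if j = k then 1 else 0)
    {A : Matrix ι ι R} {μ : ι → R} (hA : ∀ j, A *ᵥ v j = μ j • v j) (M : Matrix ι ι R) :
    (M * A).trace = ∑ j, μ j * (star (v j) ⬝ᵥ (M *ᵥ v j)) := by
  simp only [trace_eq_sum_dotProduct_mulVec hv, ← mulVec_mulVec, hA, mulVec_smul,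
    dotProduct_smul, smul_eq_mul]

theorem dotProduct_mulVec_eq_sum_eigenvalue
    (hv : ∀ j k, star (v j) ⬝ᵥ v k = if j = k then 1 else 0)
    {A : Matrix ι ι R} {μ : ι → R} (hA : ∀ j, A *ᵥ v j = μ j • v j) (x : ι → R) :
    star x ⬝ᵥ (A *ᵥ x) = ∑ j, μ j * ((star x ⬝ᵥ v j) * (star (v j) ⬝ᵥ x)) := by
  have h := trace_mul_eq_sum_eigenvalue hv hA (vecMulVec x (star x))
  rw [trace_mul_comm, mul_vecMulVec, trace_vecMulVec, dotProduct_comm] at h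
  simp only [h, vecMulVec_mulVec, op_smul_eq_smul, dotProduct_smul, smul_eq_mul]

end OrthonormalFamily

theorem star_dotProduct_mulVec_eq_sum_normSq {ι : Type*} [Fintype ι] [DecidableEq ι]
    {v : ι → ι → ℂ} (hv : ∀ j k, star (v j) ⬝ᵥ v k = if j = k then 1 else 0)
    {A : Matrix ι ι ℂ} {μ : ι → ℝ} (hA : ∀ j, A *ᵥ v j = (μ j : ℂ) • v j) (x : ι → ℂ) :
    star x ⬝ᵥ (A *ᵥ x) = ((∑ j, μ j * Complex.normSq (star (v j) ⬝ᵥ x) : ℝ) : ℂ) := by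
  rw [dotProduct_mulVec_eq_sum_eigenvalue hv hA]
  push_cast
  refine Finset.sum_congr rfl fun j _ => ?_
  rw [Complex.normSq_eq_conj_mul_self, star_dotProduct, Complex.star_def]

variable {n : ℕ}

theorem exists_ne_zero_mulVec_eq_self_of_lt_rank (v : Fin n → Fin n → ℂ)
    {P : Matrix (Fin n) (Fin n) ℂ} (hP : IsIdempotentElem P) {r : Fin n} (hr : (r : ℕ) < P.rank) :
    ∃ x ≠ 0, P *ᵥ x = x ∧ ∀ j < r, star (v j) ⬝ᵥ x = 0 := by
  let f : (Fin n → ℂ) →ₗ[ℂ] (Fin r → ℂ) :=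
    (of fun (t : Fin r) a => star (v (Fin.castLE r.isLt.le t)) a).mulVecLin
  have hker : LinearMap.ker (f ∘ₗ (LinearMap.range P.mulVecLin).subtype) ≠ ⊥ :=
    LinearMap.ker_ne_bot_of_finrank_lt (by simpa [rank] using hr)
  obtain ⟨⟨x, y, rfl⟩, hxker, hx0⟩ := Submodule.exists_mem_ne_zero_of_ne_bot hker
  refine ⟨P *ᵥ y, fun h => hx0 (Subtype.ext h), by simp [mulVec_mulVec, hP.eq], fun j hj => ?_⟩
  simpa [f, mulVec, dotProduct] using congrFun (LinearMap.mem_ker.mp hxker) ⟨j, hj⟩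

theorem le_eigenvalue_of_mul_mul_eq_smul {v : Fin n → Fin n → ℂ}
    (hv : ∀ j k, star (v j) ⬝ᵥ v k = if j = k then 1 else 0)
    {A P : Matrix (Fin n) (Fin n) ℂ} {μ : Fin n → ℝ} (hA : ∀ j, A *ᵥ v j = (μ j : ℂ) • v j)
    (hμ : Antitone μ) (hP : P.IsHermitian) (hPP : IsIdempotentElem P) {ε : ℝ}
    (hε : P * A * P = (ε : ℂ) • P) {r : Fin n} (hr : (r : ℕ) < P.rank) : ε ≤ μ r := by
  obtain ⟨x, hx, hPx, horth⟩ := exists_ne_zero_mulVec_eq_self_of_lt_rank v hPP hr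
  have hquad : star x ⬝ᵥ (A *ᵥ x) = ε * (star x ⬝ᵥ x) := by
    calc star x ⬝ᵥ (A *ᵥ x) = star x ⬝ᵥ ((P * A * P) *ᵥ x) := by
          rw [← mulVec_mulVec, ← mulVec_mulVec, hPx, hP.star_dotProduct_mulVec, hPx]
      _ = ε * (star x ⬝ᵥ x) := by rw [hε, smul_mulVec, hPx, dotProduct_smul, smul_eq_mul]
  have hnorm := star_dotProduct_mulVec_eq_sum_normSq hv (A := 1) (μ := 1) (by simp) x
  simp only [one_mulVec, Pi.one_apply, one_mul] at hnorm
  rw [star_dotProduct_mulVec_eq_sum_normSq hv hA, hnorm] at hquad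
  set N := fun j => Complex.normSq (star (v j) ⬝ᵥ x)
  have hreal : ∑ j, μ j * N j = ε * ∑ j, N j := by exact_mod_cast hquad
  have hpos : 0 < ∑ j, N j := by
    refine lt_of_le_of_ne (Finset.sum_nonneg fun j _ => Complex.normSq_nonneg _) fun h => hx ?_
    rw [← dotProduct_star_self_eq_zero, hnorm, ← h, Complex.ofReal_zero]
  have hbound : ∑ j, μ j * N j ≤ μ r * ∑ j, N j := by
    rw [Finset.mul_sum]
    refine Finset.sum_le_sum fun j _ => ?_
    rcases lt_or_ge j r with hj | hj
    · simp [N, horth j hj]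
    · exact mul_le_mul_of_nonneg_right (hμ hj) (Complex.normSq_nonneg _)
  exact le_of_mul_le_mul_right (hreal ▸ hbound) hpos

end Matrix

/- `Q.w i` is `Q.w 0` rotated by `cyclicShift n m i` (`Qnm.w_eq_cyclicShift`), and the blocks
`[cyclicShift n m i, cyclicShift n m (i + 1))` of lengths `cyclicStep n m i`, `i < m`,
partition `[0, n)`. -/
def cyclicStep (n m i : ℕ) : ℕ := n / m + if i + 1 ≤ n % m then 1 else 0

def cyclicShift (n m i : ℕ) : ℕ := i * (n / m) + min i (n % m)

theorem cyclicShift_succ (n m i : ℕ) :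
    cyclicShift n m (i + 1) = cyclicShift n m i + cyclicStep n m i := by
  unfold cyclicShift cyclicStep
  split_ifs <;> simp only [add_mul, one_mul] <;> omega

theorem cyclicShift_self {n m : ℕ} (hm : 0 < m) : cyclicShift n m m = n := by
  rw [cyclicShift, min_eq_right (Nat.mod_lt n hm).le, Nat.div_add_mod]

theorem cyclicShift_monotone (n m : ℕ) : Monotone (cyclicShift n m) :=
  monotone_nat_of_le_succ fun i => by rw [cyclicShift_succ]; exact Nat.le_add_right _ _

theorem sum_range_cyclicStep (n m k : ℕ) :
    ∑ i ∈ Finset.range k, cyclicStep n m i = cyclicShift n m k := by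
  induction k with
  | zero => simp [cyclicShift]
  | succ k ih => rw [Finset.sum_range_succ, ih, cyclicShift_succ]

theorem sum_range_cyclicShift (n m : ℕ) (f : ℕ → ℝ) (k : ℕ) :
    ∑ i ∈ Finset.range k, ∑ j ∈ Finset.range (cyclicStep n m i), f (cyclicShift n m i + j)
      = ∑ u ∈ Finset.range (cyclicShift n m k), f u := by
  induction k with
  | zero => simp [cyclicShift]
  | succ k ih => rw [Finset.sum_range_succ, ih, cyclicShift_succ, Finset.sum_range_add]

theorem add_cyclicShift_lt {n m i j : ℕ} (hm : 0 < m) (hi : i < m) (hj : j < cyclicStep n m i) :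
    j + cyclicShift n m i < n := by
  have := cyclicShift_monotone n m (show i + 1 ≤ m from hi)
  rw [cyclicShift_succ, cyclicShift_self hm] at this
  omega

theorem le_sum_min_cyclicStep {n m D : ℕ} (hm : 0 < m) (hD : D < n) :
    D + 1 ≤ ∑ i ∈ Finset.range m, min (D / m + 1) (cyclicStep n m i) := by
  rcases le_or_gt (D / m + 1) (n / m) with hR | hR
  · have hmin : ∀ i, min (D / m + 1) (cyclicStep n m i) = D / m + 1 := fun i =>
      min_eq_left (hR.trans (Nat.le_add_right _ _))
    simp only [hmin, Finset.sum_const, Finset.card_range, smul_eq_mul]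
    nlinarith [Nat.div_add_mod D m, Nat.mod_lt D hm]
  · have hmin : ∀ i, min (D / m + 1) (cyclicStep n m i) = cyclicStep n m i := fun i => by
      have : D / m ≤ n / m := Nat.div_le_div_right hD.le
      unfold cyclicStep; split_ifs <;> omega
    rw [Finset.sum_congr rfl fun i _ => hmin i, sum_range_cyclicStep, cyclicShift_self hm]
    exact hD

theorem exists_cyclicShift_mul_le {n m D : ℕ} (hm : 0 < m) (hD : D < n) {μ : ℕ → ℝ}
    (hμ : ∀ u, 0 ≤ μ u) (hsum : ∑ u ∈ Finset.range n, μ u ≤ D) :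
    ∃ i < m, ∃ j < D / m + 1,
      j + cyclicShift n m i < n ∧ (D + 1) * μ (j + cyclicShift n m i) ≤ D := by
  set s := (Finset.range m).sigma fun i => Finset.range (min (D / m + 1) (cyclicStep n m i))
  have hcard : D + 1 ≤ s.card := by
    simpa [s, Finset.card_sigma] using le_sum_min_cyclicStep hm hD
  have hs : ∑ x ∈ s, μ (x.2 + cyclicShift n m x.1) ≤ D := by
    calc ∑ x ∈ s, μ (x.2 + cyclicShift n m x.1)
        ≤ ∑ i ∈ Finset.range m, ∑ j ∈ Finset.range (cyclicStep n m i),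
            μ (cyclicShift n m i + j) := by
          rw [Finset.sum_sigma]
          refine Finset.sum_le_sum fun i _ => ?_
          simp only [add_comm _ (cyclicShift n m i)]
          exact Finset.sum_le_sum_of_subset_of_nonneg
            (Finset.range_subset_range.2 (min_le_right _ _)) fun _ _ _ => hμ _
      _ ≤ D := by rwa [sum_range_cyclicShift, cyclicShift_self hm]
  obtain ⟨⟨i, j⟩, hx, hle⟩ := Finset.exists_le_of_sum_le
    (f := fun x : (_ : ℕ) × ℕ => (D + 1 : ℝ) * μ (x.2 + cyclicShift n m x.1))
    (g := fun _ => (D : ℝ)) (s := s)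
    (Finset.card_pos.1 (by omega)) (by
      rw [← Finset.mul_sum, Finset.sum_const, nsmul_eq_mul]
      calc (D + 1 : ℝ) * ∑ x ∈ s, μ (x.2 + cyclicShift n m x.1) ≤ (D + 1) * D := by gcongr
        _ ≤ s.card * D := by gcongr; exact_mod_cast hcard)
  simp only [s, Finset.mem_sigma, Finset.mem_range, lt_min_iff] at hx
  exact ⟨i, hx.1, j, hx.2.1, add_cyclicShift_lt hm hx.1 hx.2.2, hle⟩

theorem le_sq_mul_of_mul_one_sub_le {a b x D N : ℝ} (ha : 0 ≤ a) (hb : 0 ≤ b) (hD : 0 ≤ D)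
    (hDN : D + 1 ≤ N) (hx : (D + 1) * x ≤ D) (h : a * (1 - x) ≤ b * (N - D)) :
    a ≤ N ^ 2 * b :=
  calc a ≤ (D + 1) * (a * (1 - x)) := by
        nlinarith [mul_nonneg ha (show 0 ≤ D - (D + 1) * x by linarith)]
    _ ≤ (D + 1) * (b * (N - D)) := by gcongr
    _ ≤ N ^ 2 * b := by
        have := mul_le_mul hDN (show N - D ≤ N by linarith) (by linarith) (by linarith)
        nlinarith [mul_le_mul_of_nonneg_left this hb]

namespace Qnm

variable {n m : ℕ} (Q : Qnm n m)

theorem w_eq_cyclicShift (hm : 0 < m) (i : Fin m) (j : Fin n) :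
    Q.w i j = Q.w ⟨0, hm⟩ ⟨(j + cyclicShift n m i) % n, Nat.mod_lt _ j.pos⟩ := by
  obtain ⟨i, hi⟩ := i
  induction i generalizing j with
  | zero => simp [cyclicShift, Nat.mod_eq_of_lt j.isLt]
  | succ i ih =>
    rw [Q.cyclical ⟨i, by omega⟩ hi j, ih _ (by omega)]
    congr 2
    simp only [cyclicShift_succ, cyclicStep, Nat.mod_add_mod]
    congr 1
    omega

theorem lam_antitone (i : Fin m) : Antitone (Q.lam i) := by
  intro j k hjk
  obtain ⟨k, hk⟩ := k
  replace hjk : (j : ℕ) ≤ k := hjk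
  induction k, hjk using Nat.le_induction with
  | base => rfl
  | succ k hjk ih =>
    have hn : (1 : ℝ) ≤ (n : ℝ) ^ 2 := one_le_pow₀ (by exact_mod_cast j.pos)
    calc Q.lam i ⟨k + 1, hk⟩ ≤ Q.lam i ⟨k, by omega⟩ / (n : ℝ) ^ 2 := (Q.tropical i ⟨k, _⟩ hk).le
      _ ≤ Q.lam i ⟨k, by omega⟩ := div_le_self (Q.pos i _).le hn
      _ ≤ Q.lam i j := ih _

theorem sq_mul_lam_lt (i : Fin m) {j k : Fin n} (hjk : j < k) :
    (n : ℝ) ^ 2 * Q.lam i k < Q.lam i j := by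
  obtain ⟨k, hk⟩ := k
  obtain ⟨p, rfl⟩ : ∃ p, k = p + 1 := ⟨k - 1, by simp [Fin.lt_def] at hjk; omega⟩
  have hn : (0 : ℝ) < (n : ℝ) ^ 2 := by have := j.pos; positivity
  calc (n : ℝ) ^ 2 * Q.lam i ⟨p + 1, hk⟩ < Q.lam i ⟨p, by omega⟩ := by
        have := Q.tropical i ⟨p, by omega⟩ hk
        rwa [lt_div_iff₀ hn, mul_comm] at this
    _ ≤ Q.lam i j := Q.lam_antitone i (show (j : ℕ) ≤ p by simp [Fin.lt_def] at hjk; omega)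

variable {Q}

theorem IsCode.posSemidef {P : Matrix (Fin n) (Fin n) ℂ} (hP : Q.IsCode P) : P.PosSemidef := by
  simpa [hP.1.eq, hP.2.1] using posSemidef_conjTranspose_mul_self P

theorem IsCode.trace_mul_eq {P : Matrix (Fin n) (Fin n) ℂ} (hP : Q.IsCode P) {i : Fin m} {ε : ℝ}
    (hε : P * Q.A i * P = (ε : ℂ) • P) : (P * Q.A i).trace = ε * P.rank := by
  calc (P * Q.A i).trace = (P * Q.A i * P).trace := by
        rw [trace_mul_comm (P * Q.A i) P, ← mul_assoc, hP.2.1]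
    _ = ε * P.rank := by
        rw [hε, trace_smul, smul_eq_mul, trace_eq_rank_of_isIdempotentElem hP.2.1]

variable {T : Finset (Matrix (Fin n) (Fin n) ℂ)}

theorem re_dotProduct_sum_mulVec_nonneg (hT : ∀ P ∈ T, Q.IsCode P) (x : Fin n → ℂ) :
    0 ≤ (star x ⬝ᵥ ((∑ P ∈ T, P) *ᵥ x)).re :=
  (posSemidef_sum T fun P hP => (hT P hP).posSemidef).re_dotProduct_nonneg x

theorem sum_rank_eq_sum_re (hT : ∀ P ∈ T, Q.IsCode P) (i : Fin m) :
    ((∑ P ∈ T, P.rank : ℕ) : ℝ) = ∑ j, (star (Q.w i j) ⬝ᵥ ((∑ P ∈ T, P) *ᵥ Q.w i j)).re := by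
  rw [← Complex.re_sum, ← trace_eq_sum_dotProduct_mulVec (Q.ortho i), trace_sum]
  simp [Finset.sum_congr rfl fun P hP => trace_eq_rank_of_isIdempotentElem (hT P hP).2.1]

theorem lam_mul_re_le_sum (hT : ∀ P ∈ T, Q.IsCode P) {i : Fin m} {ε : Matrix (Fin n) (Fin n) ℂ → ℝ}
    (hε : ∀ P ∈ T, P * Q.A i * P = (ε P : ℂ) • P) (j : Fin n) :
    Q.lam i j * (star (Q.w i j) ⬝ᵥ ((∑ P ∈ T, P) *ᵥ Q.w i j)).re ≤ ∑ P ∈ T, ε P * P.rank := by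
  have htr := trace_mul_eq_sum_eigenvalue (Q.ortho i) (Q.eig i) (∑ P ∈ T, P)
  rw [Finset.sum_mul, trace_sum,
    Finset.sum_congr rfl fun P hP => (hT P hP).trace_mul_eq (hε P hP)] at htr
  have hre := congrArg Complex.re htr
  simp only [Complex.re_sum, Complex.re_ofReal_mul, Complex.natCast_re] at hre
  rw [hre]
  exact Finset.single_le_sum (fun k _ => mul_nonneg (Q.pos i k).le
    (re_dotProduct_sum_mulVec_nonneg hT _)) (Finset.mem_univ j)

theorem sum_mul_rank_le (hT : ∀ P ∈ T, Q.IsCode P) {i : Fin m} {ε : Matrix (Fin n) (Fin n) ℂ → ℝ}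
    (hε : ∀ P ∈ T, P * Q.A i * P = (ε P : ℂ) • P) {r : Fin n}
    (hrank : ∀ P ∈ T, P.rank = 0 ∨ (r : ℕ) < P.rank) :
    ∑ P ∈ T, ε P * P.rank ≤ Q.lam i r * ∑ P ∈ T, P.rank := by
  push_cast
  rw [Finset.mul_sum]
  refine Finset.sum_le_sum fun P hP => ?_
  rcases hrank P hP with h | h
  · simp [h]
  · exact mul_le_mul_of_nonneg_right (le_eigenvalue_of_mul_mul_eq_smul (Q.ortho i) (Q.eig i)
      (Q.lam_antitone i) (hT P hP).1 (hT P hP).2.1 (hε P hP) h) (Nat.cast_nonneg _)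

theorem exists_mul_re_le (hm : 0 < m) {S : Finset (Matrix (Fin n) (Fin n) ℂ)}
    (hS : ∀ P ∈ S, Q.IsCode P) (hD : ∑ P ∈ S, P.rank < n) :
    ∃ (i : Fin m) (j : Fin n), (j : ℕ) < (∑ P ∈ S, P.rank) / m + 1 ∧
      ((∑ P ∈ S, P.rank : ℕ) + 1 : ℝ) * (star (Q.w i j) ⬝ᵥ ((∑ P ∈ S, P) *ᵥ Q.w i j)).re
        ≤ (∑ P ∈ S, P.rank : ℕ) := by
  let ρ : Fin n → ℝ := fun u => (star (Q.w ⟨0, hm⟩ u) ⬝ᵥ ((∑ P ∈ S, P) *ᵥ Q.w ⟨0, hm⟩ u)).re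
  let μ : ℕ → ℝ := fun u => if h : u < n then ρ ⟨u, h⟩ else 0
  have hμ : ∀ u, 0 ≤ μ u := fun u => by
    unfold μ
    split_ifs
    exacts [re_dotProduct_sum_mulVec_nonneg hS _, le_rfl]
  have hμsum : ∑ u ∈ Finset.range n, μ u ≤ (∑ P ∈ S, P.rank : ℕ) := by
    rw [← Fin.sum_univ_eq_sum_range, sum_rank_eq_sum_re hS ⟨0, hm⟩]
    simp [μ, ρ]
  obtain ⟨i, hi, j, hj, hjn, hle⟩ := exists_cyclicShift_mul_le hm hD hμ hμsum
  refine ⟨⟨i, hi⟩, ⟨j, by omega⟩, hj, ?_⟩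
  have hw : Q.w ⟨i, hi⟩ ⟨j, by omega⟩ = Q.w ⟨0, hm⟩ ⟨j + cyclicShift n m i, hjn⟩ := by
    rw [Q.w_eq_cyclicShift hm]
    exact congrArg _ (Fin.ext (Nat.mod_eq_of_lt hjn))
  simpa [hw, μ, ρ, hjn] using hle

theorem sum_rank_eq {K : Finset (Matrix (Fin n) (Fin n) ℂ)} (hK : ∀ P ∈ K, Q.IsCode P)
    (hsum : ∑ P ∈ K, P = 1) : ∑ P ∈ K, P.rank = n := by
  simpa using sum_rank_eq_card_of_sum_eq_one (fun P hP => (hK P hP).2.1) hsum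

theorem re_sum_sdiff_mulVec {K S : Finset (Matrix (Fin n) (Fin n) ℂ)} (hsum : ∑ P ∈ K, P = 1)
    (hSK : S ⊆ K) {i : Fin m} (j : Fin n) :
    (star (Q.w i j) ⬝ᵥ ((∑ P ∈ K \ S, P) *ᵥ Q.w i j)).re
      = 1 - (star (Q.w i j) ⬝ᵥ ((∑ P ∈ S, P) *ᵥ Q.w i j)).re := by
  have h : ∑ P ∈ K \ S, P = 1 - ∑ P ∈ S, P := by
    rw [← hsum, ← Finset.sum_sdiff hSK, add_sub_cancel_right]
  rw [h, sub_mulVec, one_mulVec, dotProduct_sub, Q.ortho i j j]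
  simp

theorem exists_code_rank_le (hm : 0 < m) {K : Finset (Matrix (Fin n) (Fin n) ℂ)}
    (hK : ∀ P ∈ K, Q.IsCode P) (hsum : ∑ P ∈ K, P = 1) {S : Finset (Matrix (Fin n) (Fin n) ℂ)}
    (hSK : S ⊆ K) (hD : ∑ P ∈ S, P.rank < ∑ P ∈ K, P.rank) :
    ∃ P ∈ K, P ∉ S ∧ 0 < P.rank ∧ P.rank ≤ (∑ P ∈ S, P.rank) / m + 1 := by
  classical
  have hKn := sum_rank_eq hK hsum
  obtain ⟨i, j, hj, hle⟩ := exists_mul_re_le hm (fun P hP => hK P (hSK hP)) (hD.trans_eq hKn)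
  set D := ∑ P ∈ S, P.rank
  by_contra! hbig
  set T := K \ S
  have hT : ∀ P ∈ T, Q.IsCode P := fun P hP => hK P (Finset.mem_sdiff.1 hP).1
  have hTD : ∑ P ∈ T, P.rank + D = n := by rw [Finset.sum_sdiff hSK, hKn]
  obtain ⟨P₀, hP₀, hP₀rank⟩ : ∃ P ∈ T, 0 < P.rank := by
    by_contra! h
    have := Finset.sum_eq_zero fun P hP => Nat.le_zero.1 (h P hP)
    omega
  have hRn : D / m + 1 < n := by
    have := rank_le_width P₀
    have := hbig P₀ (Finset.mem_sdiff.1 hP₀).1 (Finset.mem_sdiff.1 hP₀).2 hP₀rank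
    omega
  choose! ε hε using fun P hP => (hK P hP).2.2
  have hεT : ∀ P ∈ T, P * Q.A i * P = (ε P i : ℂ) • P := fun P hP =>
    hε P (Finset.mem_sdiff.1 hP).1 i
  have hlow := lam_mul_re_le_sum hT hεT j
  have hup := sum_mul_rank_le hT hεT (r := ⟨D / m + 1, hRn⟩) fun P hP => by
    rcases Nat.eq_zero_or_pos P.rank with h | h
    · exact .inl h
    · exact .inr (hbig P (Finset.mem_sdiff.1 hP).1 (Finset.mem_sdiff.1 hP).2 h)
  have hlt := Q.sq_mul_lam_lt i (k := ⟨D / m + 1, hRn⟩) hj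
  have hTD' : ((∑ P ∈ T, P.rank : ℕ) : ℝ) = n - D := by
    rw [eq_sub_iff_add_eq]; exact_mod_cast hTD
  rw [re_sum_sdiff_mulVec hsum hSK] at hlow
  rw [hTD'] at hup
  exact hlt.not_ge (le_sq_mul_of_mul_one_sub_le (Q.pos i j).le (Q.pos i _).le D.cast_nonneg
    (by exact_mod_cast hD.trans_eq hKn) hle (hlow.trans hup))

end Qnm

theorem coloring_card_ge_slog_general {n m : ℕ} (hm : 1 ≤ m) (Q : Qnm n m)
    (K : Finset (Matrix (Fin n) (Fin n) ℂ))
    (hK : ∀ P ∈ K, Q.IsCode P) (hsum : ∑ P ∈ K, P = 1) :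
    slog (m + 1) n ≤ K.card := by
  have h := slog_sum_le_card K rank fun S hS hlt => Qnm.exists_code_rank_le hm hK hsum hS hlt
  rwa [Qnm.sum_rank_eq hK hsum] at h

/-- Every coloring of `Q_{n,m}` (a finite set of codes whose projections sum to the
identity) has cardinality at least `slog(n, m+1)`. -/
theorem coloring_card_ge_slog {n m : ℕ} (hn : 1 ≤ n) (hm : 1 ≤ m) (Q : Qnm n m)
    (K : Finset (Matrix (Fin n) (Fin n) ℂ))
    (hK : ∀ P ∈ K, Q.IsCode P) (hsum : ∑ P ∈ K, P = 1) :
    slog (m + 1) n ≤ K.card :=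
  coloring_card_ge_slog_general hm Q K hK hsum
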